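/- arXiv:0808.1840 — 2 statements merged into one kernel-verified Lean document; each statement's English description precedes it below -/
import Mathlib

section
/- Let G be a compact topological group and S ⊆ G a subsemigroup (closed under multiplication). Then the topological closure of S in G is a subgroup of G. In particular, for every a in the closure of S, the inverse a⁻¹ also lies in the closure of S. -/
/-!
Since `G` is compact, `1` is a cluster point of the powers `x ^ n` of any `x ∈ S`, so `1` lies
in the closure of `S`, which is therefore a closed submonoid. In a compact group the closures of
the submonoid and of the subgroup generated by a set coincide (again because `x⁻¹` is a cluster
point of the powers of `x`), so the closure of `S` is the closed subgroup generated by `S`.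
-/

open Filter

namespace Subsemigroup

variable {M : Type*}

theorem pow_succ_mem [Monoid M] (S : Subsemigroup M) {x : M} (hx : x ∈ S) (n : ℕ) :
    x ^ (n + 1) ∈ S := by
  induction n with
  | zero => simpa using hx
  | succ n ih => simpa only [pow_succ x (n + 1)] using S.mul_mem ih hx

theorem closure_submonoidClosure_eq_closure [Monoid M] [TopologicalSpace M] [ContinuousMul M]
    (S : Subsemigroup M) (h1 : (1 : M) ∈ _root_.closure (S : Set M)) :
    _root_.closure (Submonoid.closure (S : Set M) : Set M) = _root_.closure (S : Set M) := by
  let closureS : Submonoid M :=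
    { carrier := _root_.closure S, mul_mem' := S.topologicalClosure.mul_mem, one_mem' := h1 }
  refine le_antisymm ?_ (_root_.closure_mono Submonoid.subset_closure)
  refine closure_minimal ?_ isClosed_closure
  exact (Submonoid.closure_le (S := closureS)).2 _root_.subset_closure

variable {G : Type*} [Group G] [TopologicalSpace G] [IsTopologicalGroup G] [CompactSpace G]

theorem one_mem_closure (S : Subsemigroup G) (hne : (S : Set G).Nonempty) :
    (1 : G) ∈ _root_.closure (S : Set G) := by
  obtain ⟨x, hx⟩ := hne
  have hpow : ∀ᶠ n in atTop, x ^ n ∈ S := eventually_atTop.2 ⟨1, fun n hn => by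
    obtain ⟨k, rfl⟩ := Nat.exists_eq_add_of_le' hn
    exact S.pow_succ_mem hx k⟩
  rw [mem_closure_iff_clusterPt]
  exact ClusterPt.mono (mapClusterPt_one_atTop_pow x) (le_principal_iff.2 (Filter.mem_map.2 hpow))

theorem closure_eq_topologicalClosure_subgroupClosure (S : Subsemigroup G)
    (hne : (S : Set G).Nonempty) :
    _root_.closure (S : Set G) = ((Subgroup.closure (S : Set G)).topologicalClosure : Set G) := by
  rw [Subgroup.topologicalClosure_coe, ← closure_submonoidClosure_eq_closure_subgroupClosure,
    S.closure_submonoidClosure_eq_closure (S.one_mem_closure hne)]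

end Subsemigroup

theorem stmt1_general {G : Type*} [Group G] [TopologicalSpace G] [IsTopologicalGroup G]
    [CompactSpace G] (S : Set G) (hne : S.Nonempty)
    (hmul : ∀ x ∈ S, ∀ y ∈ S, x * y ∈ S) :
    (∃ H : Subgroup G, (H : Set G) = closure S) ∧
      ∀ a ∈ closure S, a⁻¹ ∈ closure S := by
  let T : Subsemigroup G := ⟨S, fun {x y} hx hy => hmul x hx y hy⟩
  obtain ⟨H, hH⟩ : ∃ H : Subgroup G, (H : Set G) = closure S :=
    ⟨_, (T.closure_eq_topologicalClosure_subgroupClosure hne).symm⟩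
  exact ⟨⟨H, hH⟩, fun a ha => by
    rw [← hH] at ha ⊢
    exact H.inv_mem ha⟩

/-- In a compact (Hausdorff) topological group, the closure of a nonempty
subsemigroup is a subgroup; in particular the closure is inverse-closed. -/
theorem stmt1 {G : Type*} [Group G] [TopologicalSpace G] [IsTopologicalGroup G]
    [CompactSpace G] [T2Space G] (S : Set G) (hne : S.Nonempty)
    (hmul : ∀ x ∈ S, ∀ y ∈ S, x * y ∈ S) :
    (∃ H : Subgroup G, (H : Set G) = closure S) ∧
      ∀ a ∈ closure S, a⁻¹ ∈ closure S :=
  stmt1_general S hne hmul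
end

section
/- Let G be a compact connected Lie group (e.g., the unitary group U(N)) and M ∈ Lie(G). Then the closure of the one-parameter semigroup {exp(tM) : t ≥ 0} in G contains exp(tM) for all t ∈ ℝ; in particular it contains exp(-M) = exp(M)⁻¹. -/
/-!
In a compact group every element `g` is a limit of its positive powers `g ^ n`, and so is
`g⁻¹` (`closure_range_zpow_eq_pow`). For `t < 0` this is applied to `g = exp (-t • M)`,
which is unitary because `M` is skew-Hermitian; the unitary group is compact, being closed
and entrywise bounded.
-/

open NormedSpace Matrix Set

section CompactGroup

variable {G : Type*} [Group G] [TopologicalSpace G] [CompactSpace G] [IsTopologicalGroup G]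

theorem mem_closure_image_Ici_of_compactSpace (γ : Multiplicative ℝ →* G) (t : ℝ) :
    γ (.ofAdd t) ∈ closure ((fun s ↦ γ (.ofAdd s)) '' Ici 0) := by
  rcases le_or_gt 0 t with ht | ht
  · exact subset_closure ⟨t, ht, rfl⟩
  set g := γ (.ofAdd (-t))
  have hinv : γ (.ofAdd t) = g ^ (-1 : ℤ) := by
    rw [← map_zpow, ← ofAdd_zsmul, neg_one_zsmul, neg_neg]
  have hpow : range (g ^ · : ℕ → G) ⊆ (fun s ↦ γ (.ofAdd s)) '' Ici 0 := by
    rintro _ ⟨k, rfl⟩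
    exact ⟨k • -t, nsmul_nonneg (neg_nonneg.2 ht.le) k, by simp only [ofAdd_nsmul, map_pow, g]⟩
  refine closure_mono hpow ?_
  rw [hinv, ← closure_range_zpow_eq_pow]
  exact subset_closure ⟨-1, rfl⟩

end CompactGroup

namespace Matrix

variable {n 𝕜 : Type*} [Fintype n] [DecidableEq n] [RCLike 𝕜]

theorem isCompact_unitaryGroup : IsCompact (unitaryGroup n 𝕜 : Set (Matrix n n 𝕜)) := by
  have hclosed : IsClosed (unitaryGroup n 𝕜 : Set (Matrix n n 𝕜)) := isClosed_unitary
  open scoped Matrix.Norms.Elementwise in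
  exact Metric.isCompact_of_isClosed_isBounded hclosed
    (isBounded_iff_forall_norm_le.2 ⟨1, fun _ hU ↦ entrywise_sup_norm_bound_of_unitary hU⟩)

instance : CompactSpace (unitaryGroup n 𝕜) :=
  isCompact_iff_compactSpace.mp isCompact_unitaryGroup

theorem exp_smul_mem_unitaryGroup {M : Matrix n n 𝕜} (hM : Mᴴ = -M) (t : ℝ) :
    exp (t • M) ∈ unitaryGroup n 𝕜 := by
  rw [mem_unitaryGroup_iff, star_eq_conjTranspose, ← exp_conjTranspose, conjTranspose_smul, hM,
    star_trivial, smul_neg, ← exp_add_of_commute _ _ (Commute.refl (t • M)).neg_right,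
    add_neg_cancel, exp_zero]

noncomputable def expSMulUnitaryHom {M : Matrix n n 𝕜} (hM : Mᴴ = -M) :
    Multiplicative ℝ →* unitaryGroup n 𝕜 where
  toFun t := ⟨exp (t.toAdd • M), exp_smul_mem_unitaryGroup hM _⟩
  map_one' := by ext1; simp
  map_mul' s t := by
    apply Subtype.ext
    simp only [toAdd_mul, add_smul]
    exact exp_add_of_commute _ _ ((Commute.refl M).smul_left s.toAdd |>.smul_right t.toAdd)

end Matrix

/-- For a skew-Hermitian matrix `M` (an element of the Lie algebra of the
compact connected Lie group `U(N)`), the closure of the one-parameter semigroup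
`{exp (s M) : s ≥ 0}` contains `exp (t M)` for every real `t`; in particular it
contains `exp (-M) = exp M⁻¹`. -/
theorem stmt14 {N : ℕ} (M : Matrix (Fin N) (Fin N) ℂ) (hM : Mᴴ = -M) :
    ∀ t : ℝ, exp (t • M) ∈
      closure {X : Matrix (Fin N) (Fin N) ℂ | ∃ s : ℝ, 0 ≤ s ∧ X = exp (s • M)} := by
  intro t
  refine closure_mono ?_ (image_closure_subset_closure_image continuous_subtype_val
    ⟨_, mem_closure_image_Ici_of_compactSpace (expSMulUnitaryHom hM) t, rfl⟩)
  rintro _ ⟨_, ⟨s, hs, rfl⟩, rfl⟩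
  exact ⟨s, hs, rfl⟩
end
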